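/- arXiv:1903.02810 — 2 statements merged into one kernel-verified Lean document; each statement's English description precedes it below -/
import Mathlib

section
/- Let a, d ∈ ℝ^n with a_i > 0 for all i, let p⁻, p⁺ ∈ ℝ^n with p⁻ ≤ p⁺ componentwise, inducing the interval order P on {1,…,n} via i <_P j iff p_i⁺ < p_j⁻, and let 0 < b ≤ Σ_{i=1}^n a_i. For k ∈ {1,…,n} set I_k⁻ := { i : p_i⁺ < p_k⁻ } and I_k⁰ := { i : p_i⁻ ≤ p_k⁻ ≤ p_i⁺ }, and let K := { k : 0 < b − Σ_{i∈I_k⁻} a_i ≤ Σ_{i∈I_k⁰} a_i }. Then K is nonempty, and min{ d^T x^F : F a fractional prefix of P with a^T x^F = b } = min over k ∈ K of ( Σ_{i∈I_k⁻} d_i + min{ Σ_{i∈I_k⁰} d_i y_i : y ∈ [0,1]^{I_k⁰}, Σ_{i∈I_k⁰} a_i y_i = b − Σ_{i∈I_k⁻} a_i } ). -/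
/-- The vector associated with a fractional prefix `(J, j, λ)`. -/
def fracVec {n : ℕ} (J : Finset (Fin n)) (j : Fin n) (lam : ℝ) : Fin n → ℝ :=
  fun i => if i = j then lam else if i ∈ J then 1 else 0

/-!
Take an element `k` of largest `p⁻` in a fractional prefix `J`: then `I_k⁻ ⊆ J ⊆ I_k⁻ ∪ I_k⁰`, the
split item lies in `I_k⁰`, and the prefix vector restricted to `I_k⁰` is a feasible knapsack
solution of the same value, so `k ∈ K`. Conversely, for `k ∈ K` the continuous knapsack over `I_k⁰`
is solved by filling greedily in order of `dᵢ / aᵢ` (LP duality with the ratio of the split item as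
multiplier); adding `I_k⁻` to the greedy fill gives a fractional prefix of `P`, since every item of
`I_k⁰` starts no later than `p_k⁻`, which no such item ends before. The fractional prefixes with
`aᵀx = b` take finitely many values (`λ` is determined by `(J, j)`), and one exists: a prefix of a
linear extension.
-/

open Finset

theorem Finset.exists_fractional_prefix {ι α : Type*} [DecidableEq ι] [LinearOrder α]
    {p : ι → α} (hp : Function.Injective p) {a : ι → ℝ} (s : Finset ι)
    (ha : ∀ i ∈ s, 0 < a i) {c : ℝ} (hc0 : 0 < c) (hcs : c ≤ ∑ i ∈ s, a i) :
    ∃ m ∈ s, ∃ lam : ℝ, 0 < lam ∧ lam ≤ 1 ∧ ∑ i ∈ s with p i < p m, a i + lam * a m = c := by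
  induction s using Finset.induction_on_max_value p generalizing c with
  | empty => simp at hcs; linarith
  | insert m t hmt hmax ih =>
    rw [sum_insert hmt] at hcs
    have ha' : ∀ i ∈ t, 0 < a i := fun i hi => ha i (mem_insert_of_mem hi)
    have hlt : ∀ i ∈ t, p i < p m := fun i hi =>
      (hmax i hi).lt_of_ne (hp.ne (ne_of_mem_of_not_mem hi hmt))
    by_cases hct : c ≤ ∑ i ∈ t, a i
    · obtain ⟨m', hm', lam, hl0, hl1, hsum⟩ := ih ha' hc0 hct
      refine ⟨m', mem_insert_of_mem hm', lam, hl0, hl1, ?_⟩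
      rwa [filter_insert, if_neg (hlt m' hm').asymm]
    · have ham := ha m (mem_insert_self m t)
      refine ⟨m, mem_insert_self m t, (c - ∑ i ∈ t, a i) / a m, by
        apply div_pos <;> linarith, by rw [div_le_one ham]; linarith, ?_⟩
      rw [filter_insert, if_neg (lt_irrefl _), filter_true_of_mem hlt, div_mul_cancel₀ _ ham.ne']
      ring

theorem Finset.exists_greedy_knapsack_le {ι : Type*} [LinearOrder ι] (s : Finset ι)
    {a : ι → ℝ} (ha : ∀ i ∈ s, 0 < a i) (d : ι → ℝ) {c : ℝ} (hc0 : 0 < c)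
    (hcs : c ≤ ∑ i ∈ s, a i) :
    ∃ S ⊆ s, ∃ m ∈ s, m ∉ S ∧ ∃ lam : ℝ, 0 < lam ∧ lam ≤ 1 ∧
      ∑ i ∈ S, a i + lam * a m = c ∧
      ∀ y : ι → ℝ, (∀ i ∈ s, 0 ≤ y i ∧ y i ≤ 1) → ∑ i ∈ s, a i * y i = c →
        ∑ i ∈ S, d i + lam * d m ≤ ∑ i ∈ s, d i * y i := by
  set p : ι → ℝ ×ₗ ι := fun i => toLex (d i / a i, i)
  have hp : Function.Injective p := fun i j h => congrArg (fun x => (ofLex x).2) h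
  obtain ⟨m, hm, lam, hl0, hl1, hsum⟩ := s.exists_fractional_prefix hp ha hc0 hcs
  refine ⟨_, filter_subset _ s, m, hm, by simp, lam, hl0, hl1, hsum, fun y hy hyc => ?_⟩
  set r := d m / a m
  have hrm : d m = r * a m := (div_mul_cancel₀ _ (ha m hm).ne').symm
  -- weak LP duality, with the ratio `r` of the split item as multiplier
  have hbelow : ∀ i ∈ {i ∈ s | p i < p m}, 0 ≤ (d i - r * a i) * (y i - 1) := by
    intro i hi
    obtain ⟨his, hpi⟩ := mem_filter.mp hi
    have : d i / a i ≤ r := Prod.Lex.monotone_fst _ _ hpi.le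
    rw [div_le_iff₀ (ha i his)] at this
    exact mul_nonneg_of_nonpos_of_nonpos (by linarith) (by linarith [hy i his])
  have habove : ∀ i ∈ {i ∈ s | ¬ p i < p m}, 0 ≤ (d i - r * a i) * y i := by
    intro i hi
    obtain ⟨his, hpi⟩ := mem_filter.mp hi
    have : r ≤ d i / a i := Prod.Lex.monotone_fst _ _ (not_lt.mp hpi)
    rw [le_div_iff₀ (ha i his)] at this
    exact mul_nonneg (by linarith) (hy i his).1
  have key : ∑ i ∈ s, d i * y i - (∑ i ∈ s with p i < p m, d i + lam * d m) =
      ∑ i ∈ s with p i < p m, (d i - r * a i) * (y i - 1) +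
        ∑ i ∈ s with ¬ p i < p m, (d i - r * a i) * y i := by
    have hdy := sum_filter_add_sum_filter_not s (fun i => p i < p m) (fun i => d i * y i)
    have hay := sum_filter_add_sum_filter_not s (fun i => p i < p m) (fun i => a i * y i)
    simp only [sub_mul, mul_sub, mul_one, sum_sub_distrib, ← mul_sum, mul_assoc]
    linear_combination -hdy + r * hay + r * hyc - r * hsum - lam * hrm
  linarith [sum_nonneg hbelow, sum_nonneg habove]

theorem Finset.sum_mul_eq_add_of_eq_one_of_eq_zero {ι : Type*} [Fintype ι] [DecidableEq ι]
    {S T : Finset ι} (hST : Disjoint S T) {x : ι → ℝ} (h1 : ∀ i ∈ S, x i = 1)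
    (h0 : ∀ i ∉ S ∪ T, x i = 0) (f : ι → ℝ) :
    ∑ i, f i * x i = ∑ i ∈ S, f i + ∑ i ∈ T, f i * x i := by
  rw [← sum_subset (subset_univ (S ∪ T)) fun i _ hi => by rw [h0 i hi, mul_zero],
    sum_union hST]
  exact congrArg (· + _) (sum_congr rfl fun i hi => by rw [h1 i hi, mul_one])

section FracVec

variable {n : ℕ}

theorem sum_mul_fracVec (f : Fin n → ℝ) (J : Finset (Fin n)) (j : Fin n) (lam : ℝ) :
    ∑ i, f i * fracVec J j lam i = ∑ i ∈ J.erase j, f i + lam * f j := by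
  rw [sum_mul_eq_add_of_eq_one_of_eq_zero (T := {j})
    (disjoint_singleton_right.mpr (notMem_erase j J)) (fun i hi => ?_) (fun i hi => ?_),
    sum_singleton, mul_comm]
  · simp [fracVec]
  · simp [fracVec, (mem_erase.mp hi).1, (mem_erase.mp hi).2]
  · simp only [mem_union, mem_erase, mem_singleton, not_or, not_and] at hi
    simp [fracVec, hi.2, hi.1 hi.2]

theorem sum_mul_fracVec_insert (f : Fin n → ℝ) {R : Finset (Fin n)} {m : Fin n} (hm : m ∉ R)
    (lam : ℝ) : ∑ i, f i * fracVec (insert m R) m lam i = ∑ i ∈ R, f i + lam * f m := by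
  rw [sum_mul_fracVec, erase_insert hm]

theorem fracVec_nonneg {J : Finset (Fin n)} {j : Fin n} {lam : ℝ} (hlam : 0 ≤ lam) (i : Fin n) :
    0 ≤ fracVec J j lam i := by
  unfold fracVec; split_ifs <;> norm_num [hlam]

theorem fracVec_le_one {J : Finset (Fin n)} {j : Fin n} {lam : ℝ} (hlam : lam ≤ 1) (i : Fin n) :
    fracVec J j lam i ≤ 1 := by
  unfold fracVec; split_ifs <;> norm_num [hlam]

end FracVec

section IntervalOrder

variable {n : ℕ}

-- `predecessors`, `straddling` and `heads` are the paper's `I_k⁻`, `I_k⁰` and `K`.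
noncomputable def predecessors (pm pp : Fin n → ℝ) (k : Fin n) : Finset (Fin n) :=
  univ.filter fun i => pp i < pm k

noncomputable def straddling (pm pp : Fin n → ℝ) (k : Fin n) : Finset (Fin n) :=
  univ.filter fun i => pm i ≤ pm k ∧ pm k ≤ pp i

def IsFracPrefix (pm pp : Fin n → ℝ) (J : Finset (Fin n)) (j : Fin n) (lam : ℝ) : Prop :=
  J.Nonempty ∧ j ∈ J ∧ (∀ k ∈ J, ∀ i : Fin n, pp i < pm k → i ∈ J) ∧
    (∀ i ∈ J, ¬ (pp j < pm i)) ∧ 0 < lam ∧ lam ≤ 1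

noncomputable def heads (pm pp a : Fin n → ℝ) (b : ℝ) : Finset (Fin n) :=
  univ.filter fun k => 0 < b - ∑ i ∈ predecessors pm pp k, a i ∧
    b - ∑ i ∈ predecessors pm pp k, a i ≤ ∑ i ∈ straddling pm pp k, a i

-- The conjuncts of `IsFracPrefix` are spelled out so that this is literally the set of the theorem.
def prefixValues (pm pp a d : Fin n → ℝ) (b : ℝ) : Set ℝ :=
  {v : ℝ | ∃ (J : Finset (Fin n)) (j : Fin n) (lam : ℝ),
    J.Nonempty ∧ j ∈ J ∧
    (∀ k ∈ J, ∀ i : Fin n, pp i < pm k → i ∈ J) ∧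
    (∀ i ∈ J, ¬ (pp j < pm i)) ∧
    0 < lam ∧ lam ≤ 1 ∧
    (∑ i, a i * fracVec J j lam i) = b ∧
    v = ∑ i, d i * fracVec J j lam i}

def headValues (pm pp a d : Fin n → ℝ) (b : ℝ) : Set ℝ :=
  {v : ℝ | ∃ k ∈ heads pm pp a b, ∃ y : Fin n → ℝ,
    (∀ i ∈ straddling pm pp k, 0 ≤ y i ∧ y i ≤ 1) ∧
    (∑ i ∈ straddling pm pp k, a i * y i) = b - ∑ i ∈ predecessors pm pp k, a i ∧
    v = (∑ i ∈ predecessors pm pp k, d i) + ∑ i ∈ straddling pm pp k, d i * y i}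

variable {pm pp a d : Fin n → ℝ} {b : ℝ}

theorem mem_prefixValues {v : ℝ} :
    v ∈ prefixValues pm pp a d b ↔ ∃ (J : Finset (Fin n)) (j : Fin n) (lam : ℝ),
      IsFracPrefix pm pp J j lam ∧ ∑ i, a i * fracVec J j lam i = b ∧
        v = ∑ i, d i * fracVec J j lam i := by
  simp only [prefixValues, IsFracPrefix, Set.mem_ofPred_eq, and_assoc]

theorem disjoint_predecessors_straddling (k : Fin n) :
    Disjoint (predecessors pm pp k) (straddling pm pp k) := by
  simp only [predecessors, straddling, disjoint_filter]
  intro i _ h h'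
  linarith [h'.2]

theorem IsFracPrefix.exists_head {J : Finset (Fin n)} {j : Fin n} {lam : ℝ}
    (hF : IsFracPrefix pm pp J j lam) :
    ∃ k, predecessors pm pp k ⊆ J ∧ j ∈ straddling pm pp k ∧
      J ⊆ predecessors pm pp k ∪ straddling pm pp k := by
  obtain ⟨hne, hj, hlow, hmax, -⟩ := hF
  obtain ⟨k, hk, hkmax⟩ := exists_max_image J pm hne
  refine ⟨k, fun i hi => hlow k hk i (mem_filter.mp hi).2,
    mem_filter.mpr ⟨mem_univ _, hkmax j hj, not_lt.mp (hmax k hk)⟩, fun i hi => ?_⟩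
  simp only [predecessors, straddling, mem_union, mem_filter, mem_univ, true_and]
  exact (lt_or_ge (pp i) (pm k)).imp id (⟨hkmax i hi, ·⟩)

theorem sum_mul_fracVec_eq_of_head {J : Finset (Fin n)} {j k : Fin n} (lam : ℝ)
    (hpred : predecessors pm pp k ⊆ J) (hj : j ∈ straddling pm pp k)
    (hJ : J ⊆ predecessors pm pp k ∪ straddling pm pp k) (f : Fin n → ℝ) :
    ∑ i, f i * fracVec J j lam i =
      ∑ i ∈ predecessors pm pp k, f i + ∑ i ∈ straddling pm pp k, f i * fracVec J j lam i := by
  have hdisj := disjoint_predecessors_straddling (pm := pm) (pp := pp) k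
  refine sum_mul_eq_add_of_eq_one_of_eq_zero hdisj (fun i hi => ?_) (fun i hi => ?_) f
  · have hij : i ≠ j := fun h => disjoint_left.mp hdisj hi (h ▸ hj)
    simp [fracVec, hij, hpred hi]
  · have hij : i ≠ j := fun h => hi (mem_union_right _ (h ▸ hj))
    simp only [fracVec, if_neg hij, ite_eq_right_iff, one_ne_zero, imp_false]
    exact fun h => hi (hJ h)

theorem mem_headValues_of_mem_prefixValues (ha : ∀ i, 0 < a i) {v : ℝ}
    (hv : v ∈ prefixValues pm pp a d b) : v ∈ headValues pm pp a d b := by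
  obtain ⟨J, j, lam, hF, hsum, rfl⟩ := mem_prefixValues.mp hv
  obtain ⟨k, hpred, hj, hJ⟩ := hF.exists_head
  have hsplit := sum_mul_fracVec_eq_of_head lam hpred hj hJ
  obtain ⟨-, -, -, -, hl0, hl1⟩ := hF
  set x := fracVec J j lam
  have hax : ∑ i ∈ straddling pm pp k, a i * x i = b - ∑ i ∈ predecessors pm pp k, a i := by
    linarith [hsplit a]
  refine ⟨k, mem_filter.mpr ⟨mem_univ _, ?_, ?_⟩, x,
    fun i _ => ⟨fracVec_nonneg hl0.le i, fracVec_le_one hl1 i⟩, hax, hsplit d⟩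
  · rw [← hax]
    calc 0 < a j * x j := mul_pos (ha j) (by simpa [x, fracVec] using hl0)
      _ ≤ _ := single_le_sum (fun i _ => mul_nonneg (ha i).le (fracVec_nonneg hl0.le i)) hj
  · rw [← hax]
    exact sum_le_sum fun i _ => mul_le_of_le_one_right (ha i).le (fracVec_le_one hl1 i)

theorem isFracPrefix_insert_of_head (hp : ∀ i, pm i ≤ pp i) {k m : Fin n}
    {S : Finset (Fin n)} (hS : S ⊆ straddling pm pp k) (hm : m ∈ straddling pm pp k)
    {lam : ℝ} (hl0 : 0 < lam) (hl1 : lam ≤ 1) :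
    IsFracPrefix pm pp (insert m (predecessors pm pp k ∪ S)) m lam := by
  have hle : ∀ i ∈ insert m (predecessors pm pp k ∪ S), pm i ≤ pm k := by
    intro i hi
    rcases mem_insert.mp hi with rfl | hi
    · exact (mem_filter.mp hm).2.1
    rcases mem_union.mp hi with hi | hi
    · exact (hp i).trans (mem_filter.mp hi).2.le
    · exact (mem_filter.mp (hS hi)).2.1
  refine ⟨insert_nonempty _ _, mem_insert_self _ _, fun k' hk' i hi => ?_,
    fun i hi => not_lt.mpr ((hle i hi).trans (mem_filter.mp hm).2.2), hl0, hl1⟩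
  exact mem_insert_of_mem (mem_union_left _ (mem_filter.mpr ⟨mem_univ _, hi.trans_le (hle k' hk')⟩))

theorem exists_le_of_mem_headValues (ha : ∀ i, 0 < a i) (hp : ∀ i, pm i ≤ pp i) {v : ℝ}
    (hv : v ∈ headValues pm pp a d b) : ∃ u ∈ prefixValues pm pp a d b, u ≤ v := by
  obtain ⟨k, hk, y, hy, hya, rfl⟩ := hv
  obtain ⟨hc0, hcs⟩ := (mem_filter.mp hk).2
  obtain ⟨S, hS, m, hm, hmS, lam, hl0, hl1, hsum, hopt⟩ :=
    (straddling pm pp k).exists_greedy_knapsack_le (fun i _ => ha i) d hc0 hcs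
  have hdisj := disjoint_predecessors_straddling (pm := pm) (pp := pp) k
  have hmR : m ∉ predecessors pm pp k ∪ S :=
    notMem_union.mpr ⟨disjoint_right.mp hdisj hm, hmS⟩
  have hsplit (f : Fin n → ℝ) : ∑ i, f i * fracVec (insert m (predecessors pm pp k ∪ S)) m lam i =
      ∑ i ∈ predecessors pm pp k, f i + (∑ i ∈ S, f i + lam * f m) := by
    rw [sum_mul_fracVec_insert f hmR, sum_union (disjoint_of_subset_right hS hdisj), add_assoc]
  refine ⟨_, mem_prefixValues.mpr
    ⟨_, m, lam, isFracPrefix_insert_of_head hp hS hm hl0 hl1, ?_, rfl⟩, ?_⟩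
  · rw [hsplit a, hsum]
    ring
  · rw [hsplit d]
    linarith [hopt y hy hya]

theorem prefixValues_finite (ha : ∀ i, 0 < a i) : (prefixValues pm pp a d b).Finite := by
  refine (Set.finite_range fun q : Finset (Fin n) × Fin n =>
    ∑ i, d i * fracVec q.1 q.2 ((b - ∑ i ∈ q.1.erase q.2, a i) / a q.2) i).subset ?_
  intro v hv
  obtain ⟨J, j, lam, -, hsum, rfl⟩ := mem_prefixValues.mp hv
  rw [sum_mul_fracVec] at hsum
  have hlam : lam = (b - ∑ i ∈ J.erase j, a i) / a j := by
    rw [eq_div_iff (ha j).ne']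
    linarith
  exact ⟨(J, j), by rw [hlam]⟩

theorem prefixValues_nonempty (ha : ∀ i, 0 < a i) (hp : ∀ i, pm i ≤ pp i) (hb0 : 0 < b)
    (hb1 : b ≤ ∑ i, a i) : (prefixValues pm pp a d b).Nonempty := by
  -- a fractional prefix of the linear extension of `P` that sorts by `pm`
  set key : Fin n → ℝ ×ₗ Fin n := fun i => toLex (pm i, i)
  have hkey : Function.Injective key := fun i j h => congrArg (fun x => (ofLex x).2) h
  obtain ⟨m, -, lam, hl0, hl1, hsum⟩ :=
    univ.exists_fractional_prefix hkey (fun i _ => ha i) hb0 hb1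
  set R := univ.filter fun i => key i < key m
  have hmR : m ∉ R := by simp [R]
  have hle : ∀ i ∈ insert m R, key i ≤ key m := by
    intro i hi
    rcases mem_insert.mp hi with rfl | hi
    · exact le_rfl
    · exact (mem_filter.mp hi).2.le
  have hF : IsFracPrefix pm pp (insert m R) m lam := by
    refine ⟨insert_nonempty _ _, mem_insert_self _ _, fun k hk i hi => ?_,
      fun i hi => not_lt.mpr ((Prod.Lex.monotone_fst _ _ (hle i hi)).trans (hp m)), hl0, hl1⟩
    have hik : key i < key k := Prod.Lex.lt_iff.mpr (Or.inl ((hp i).trans_lt hi))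
    exact mem_insert_of_mem (mem_filter.mpr ⟨mem_univ _, hik.trans_le (hle k hk)⟩)
  exact ⟨_, mem_prefixValues.mpr ⟨_, m, lam, hF, by rw [sum_mul_fracVec_insert a hmR, hsum], rfl⟩⟩

end IntervalOrder

open Finset in
/-- Correctness of the head-decomposition algorithm for the adversary's problem:
for the interval order `P` given by `i <_P j ↔ pᵢ⁺ < pⱼ⁻`, the minimum of
`dᵀ x^F` over fractional prefixes `F` with `aᵀ x^F = b` equals the minimum over
heads `k ∈ K` of `∑_{i ∈ I_k⁻} dᵢ` plus the optimal value of the continuous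
knapsack over `I_k⁰` with capacity `b − ∑_{i ∈ I_k⁻} aᵢ`; moreover `K ≠ ∅`. -/
theorem head_decomposition_correct
    (n : ℕ) (a d pm pp : Fin n → ℝ) (ha : ∀ i, 0 < a i)
    (hp : ∀ i, pm i ≤ pp i)
    (b : ℝ) (hb0 : 0 < b) (hb1 : b ≤ ∑ i, a i) :
    let Ikm : Fin n → Finset (Fin n) := fun k => univ.filter fun i => pp i < pm k
    let Ik0 : Fin n → Finset (Fin n) := fun k =>
      univ.filter fun i => pm i ≤ pm k ∧ pm k ≤ pp i
    let K : Finset (Fin n) := univ.filter fun k =>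
      0 < b - ∑ i ∈ Ikm k, a i ∧ b - ∑ i ∈ Ikm k, a i ≤ ∑ i ∈ Ik0 k, a i
    K.Nonempty ∧
    ∃ v : ℝ,
      IsLeast {v : ℝ | ∃ (J : Finset (Fin n)) (j : Fin n) (lam : ℝ),
        J.Nonempty ∧ j ∈ J ∧
        (∀ k ∈ J, ∀ i : Fin n, pp i < pm k → i ∈ J) ∧
        (∀ i ∈ J, ¬ (pp j < pm i)) ∧
        0 < lam ∧ lam ≤ 1 ∧
        (∑ i, a i * fracVec J j lam i) = b ∧
        v = ∑ i, d i * fracVec J j lam i} v ∧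
      IsLeast {v : ℝ | ∃ k ∈ K, ∃ y : Fin n → ℝ,
        (∀ i ∈ Ik0 k, 0 ≤ y i ∧ y i ≤ 1) ∧
        (∑ i ∈ Ik0 k, a i * y i) = b - ∑ i ∈ Ikm k, a i ∧
        v = (∑ i ∈ Ikm k, d i) + ∑ i ∈ Ik0 k, d i * y i} v := by
  intro Ikm Ik0 K
  obtain ⟨v, hv, hmin⟩ := Set.exists_min_image _ id (prefixValues_finite (d := d) (b := b) ha)
    (prefixValues_nonempty (d := d) ha hp hb0 hb1)
  have hv' : v ∈ headValues pm pp a d b := mem_headValues_of_mem_prefixValues ha hv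
  obtain ⟨k, hk, -⟩ := id hv'
  refine ⟨⟨k, hk⟩, v, ⟨hv, hmin⟩, hv', fun w hw => ?_⟩
  obtain ⟨u, hu, huw⟩ := exists_le_of_mem_headValues ha hp hw
  exact (hmin u hu).trans huw
end

section
/- In the discrete uncorrelated reduction instance, suppose W is not a subset sum, i.e., there is no S ⊆ {1,…,m} with Σ_{i∈S} w_i = W, and let V be the largest subset sum with V < W. Then f(b) = −M − V + (ε/M)(b − V − ε) for all b ∈ [W, W + 2ε]; in particular, f is strictly increasing on [W, W + 2ε] and its unique maximizer over this interval is b = W + 2ε. -/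
/-!
For every `c ∈ U` the profit ratios `c i / a i` are `1` or `m + 3` on the `ε`-item, below
`m + 2` or above `m + 3` on the items `w j`, and `m + 2` or `2m + 4` on the `M`-item. An optimal
fractional knapsack solution `x` fills the budget `b < M` by decreasing ratio, so the `M`-item
is never full, and if the `ε`-item is used at all then every item `w j` is taken wholly or not
at all and the `ε`-item is full (else `b - ε x₀` would be the subset sum `W`). Hence the leader's
value `dᵀx = -b + (ε - M) x₀ + (M + ε) x_M` is at least the claimed affine function, with equality
when the `ε`-item and a subset of sum `V` are priced above the ratio `m + 2` of the `M`-item and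
all other items below it.
-/

noncomputable section

/-- Feasibility for the follower's continuous knapsack problem. -/
def feasibleKP {n : ℕ} (a : Fin n → ℝ) (b : ℝ) (x : Fin n → ℝ) : Prop :=
  (∑ i, a i * x i) ≤ b ∧ ∀ i, 0 ≤ x i ∧ x i ≤ 1

/-- Optimality for the follower's continuous knapsack problem with profits `c`. -/
def optimalKP {n : ℕ} (a c : Fin n → ℝ) (b : ℝ) (x : Fin n → ℝ) : Prop :=
  feasibleKP a b x ∧ ∀ y, feasibleKP a b y → ∑ i, c i * y i ≤ ∑ i, c i * x i

/-- The constant `ε = 1/4` of the reduction instance. -/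
def eps : ℝ := 1 / 4

/-- The constant `M = ∑ wᵢ + ε` of the reduction instance. -/
def Mval (m : ℕ) (w : Fin m → ℤ) : ℝ := (∑ i, (w i : ℝ)) + eps

/-- Item sizes `a = (ε, w₁, …, w_m, M)` of the reduction instance. -/
def avec (m : ℕ) (w : Fin m → ℤ) : Fin (m + 2) → ℝ := fun i =>
  if h0 : (i : ℕ) = 0 then eps
  else if h1 : (i : ℕ) = m + 1 then Mval m w
  else (w ⟨(i : ℕ) - 1, by have := i.isLt; omega⟩ : ℝ)

/-- Leader's item values `d = (−M, −w₁, …, −w_m, ε)` of the reduction instance. -/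
def dvec (m : ℕ) (w : Fin m → ℤ) : Fin (m + 2) → ℝ := fun i =>
  if h0 : (i : ℕ) = 0 then -Mval m w
  else if h1 : (i : ℕ) = m + 1 then eps
  else -(w ⟨(i : ℕ) - 1, by have := i.isLt; omega⟩ : ℝ)

/-- Membership in the discrete uncorrelated uncertainty set
`U = ∏_{i=1}^{n} {i·aᵢ, (n+i)·aᵢ}` (with `n = m + 2` and 1-based indices). -/
def inU (m : ℕ) (w : Fin m → ℤ) (c : Fin (m + 2) → ℝ) : Prop :=
  ∀ i : Fin (m + 2),
    c i = ((i : ℕ) + 1) * avec m w i ∨ c i = ((m + 2) + ((i : ℕ) + 1)) * avec m w i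

/-- The leader's objective `f(b) = min_{c ∈ U} min { dᵀx : x optimal for c }`
of the reduction instance (pessimistic view). -/
def fval (m : ℕ) (w : Fin m → ℤ) (b : ℝ) : ℝ :=
  sInf {v : ℝ | ∃ c x : Fin (m + 2) → ℝ,
    inU m w c ∧ optimalKP (avec m w) c b x ∧ v = ∑ i, dvec m w i * x i}

/-- `V` is a subset sum of `{w₁, …, w_m}`. -/
def isSubsetSum (m : ℕ) (w : Fin m → ℤ) (V : ℝ) : Prop :=
  ∃ S : Finset (Fin m), V = ∑ i ∈ S, (w i : ℝ)

section Knapsack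

variable {n : ℕ} {a c x : Fin n → ℝ} {b : ℝ}

theorem optimalKP.dotProduct_le_zero {e : Fin n → ℝ} (hx : optimalKP a c b x)
    (he : feasibleKP a b (x + e)) : c ⬝ᵥ e ≤ 0 := by
  have : c ⬝ᵥ (x + e) ≤ c ⬝ᵥ x := hx.2 _ he
  rw [dotProduct_add] at this
  linarith

theorem optimalKP.dotProduct_eq (ha : ∀ i, 0 < a i) (hc : ∀ i, 0 < c i)
    (hb : b < ∑ i, a i) (hx : optimalKP a c b x) : a ⬝ᵥ x = b := by
  obtain ⟨hxb, hbox⟩ : a ⬝ᵥ x ≤ b ∧ _ := hx.1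
  refine le_antisymm hxb (not_lt.1 fun hlt => ?_)
  obtain ⟨i, hi⟩ : ∃ i, x i < 1 := by
    by_contra! h
    have : a ⬝ᵥ x = ∑ i, a i :=
      Finset.sum_congr rfl fun i _ => by rw [le_antisymm (hbox i).2 (h i), mul_one]
    linarith
  set t := min (1 - x i) ((b - a ⬝ᵥ x) / a i)
  have ht : 0 < t := lt_min (by linarith) (div_pos (by linarith) (ha i))
  have ht₁ : t ≤ 1 - x i := min_le_left _ _
  have ht₂ : a i * t ≤ b - a ⬝ᵥ x := by
    rw [mul_comm, ← le_div_iff₀ (ha i)]; exact min_le_right _ _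
  have hfeas : feasibleKP a b (x + Pi.single i t) := by
    refine ⟨?_, fun k => ?_⟩
    · change a ⬝ᵥ (x + Pi.single i t) ≤ b
      rw [dotProduct_add, dotProduct_single]
      linarith
    · rcases eq_or_ne k i with rfl | hk
      · simp only [Pi.add_apply, Pi.single_eq_same]
        constructor <;> linarith [(hbox k).1]
      · simpa [Pi.single_eq_of_ne hk] using hbox k
  have := hx.dotProduct_le_zero hfeas
  rw [dotProduct_single] at this
  nlinarith [hc i]

theorem optimalKP.div_le_div_of_lt_one_of_pos (ha : ∀ i, 0 < a i) (hx : optimalKP a c b x)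
    {i j : Fin n} (hi : x i < 1) (hj : 0 < x j) : c i / a i ≤ c j / a j := by
  obtain ⟨hxb, hbox⟩ : a ⬝ᵥ x ≤ b ∧ _ := hx.1
  by_contra! hlt
  have hij : i ≠ j := by rintro rfl; exact lt_irrefl _ hlt
  set t := min ((1 - x i) * a i) (x j * a j)
  have ht : 0 < t := lt_min (mul_pos (by linarith) (ha i)) (mul_pos hj (ha j))
  have hti : t / a i ≤ 1 - x i := by
    rw [div_le_iff₀ (ha i)]; exact min_le_left _ _
  have htj : t / a j ≤ x j := by
    rw [div_le_iff₀ (ha j)]; exact min_le_right _ _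
  have hdot : ∀ f : Fin n → ℝ, f ⬝ᵥ (Pi.single i (t / a i) - Pi.single j (t / a j))
      = t * (f i / a i - f j / a j) := fun f => by
    rw [dotProduct_sub, dotProduct_single, dotProduct_single]; ring
  have hfeas : feasibleKP a b (x + (Pi.single i (t / a i) - Pi.single j (t / a j))) := by
    refine ⟨?_, fun k => ?_⟩
    · change a ⬝ᵥ (x + _) ≤ b
      rw [dotProduct_add, hdot, div_self (ha i).ne', div_self (ha j).ne']
      simpa using hxb
    · have := div_pos ht (ha i); have := div_pos ht (ha j)
      rcases eq_or_ne k i with rfl | hki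
      · simp only [Pi.add_apply, Pi.sub_apply, Pi.single_eq_same, Pi.single_eq_of_ne hij]
        constructor <;> linarith [(hbox k).1]
      rcases eq_or_ne k j with rfl | hkj
      · simp only [Pi.add_apply, Pi.sub_apply, Pi.single_eq_same, Pi.single_eq_of_ne hki]
        constructor <;> linarith [(hbox k).2]
      · simpa [Pi.single_eq_of_ne hki, Pi.single_eq_of_ne hkj] using hbox k
  have := hx.dotProduct_le_zero hfeas
  rw [hdot] at this
  nlinarith

theorem optimalKP_of_dual {r : ℝ} (hr : 0 ≤ r) (hbox : ∀ i, 0 ≤ x i ∧ x i ≤ 1)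
    (hxb : a ⬝ᵥ x = b)
    (hslack : ∀ i, (r * a i < c i → x i = 1) ∧ (c i < r * a i → x i = 0)) :
    optimalKP a c b x := by
  refine ⟨⟨hxb.le, hbox⟩, fun y ⟨(hyb : a ⬝ᵥ y ≤ b), hybox⟩ => ?_⟩
  have hterm : ∀ i, (c - r • a) i * y i ≤ (c - r • a) i * x i := fun i => by
    simp only [Pi.sub_apply, Pi.smul_apply, smul_eq_mul]
    rcases lt_trichotomy (c i) (r * a i) with h | h | h
    · rw [(hslack i).2 h]; nlinarith [(hybox i).1]
    · simp [h]
    · rw [(hslack i).1 h]; nlinarith [(hybox i).2]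
  have hsum : (c - r • a) ⬝ᵥ y ≤ (c - r • a) ⬝ᵥ x := Finset.sum_le_sum fun i _ => hterm i
  rw [sub_dotProduct, sub_dotProduct, smul_dotProduct, smul_dotProduct, hxb, smul_eq_mul,
    smul_eq_mul] at hsum
  change c ⬝ᵥ y ≤ c ⬝ᵥ x
  nlinarith [mul_le_mul_of_nonneg_left hyb hr]

end Knapsack

namespace Fin

variable {α : Type*} {m : ℕ}

theorem sum_univ_add_two [AddCommMonoid α] (g : Fin (m + 2) → α) :
    ∑ i, g i = g 0 + ∑ j : Fin m, g j.castSucc.succ + g (last (m + 1)) := by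
  rw [sum_univ_succ, sum_univ_castSucc, succ_last]
  exact (add_assoc _ _ _).symm

theorem forall_add_two {P : Fin (m + 2) → Prop} (h₀ : P 0)
    (hmid : ∀ j : Fin m, P j.castSucc.succ) (hlast : P (last (m + 1))) : ∀ i, P i := by
  refine cases h₀ fun i => lastCases ?_ hmid i
  rwa [succ_last]

def consSnoc (u : α) (v : Fin m → α) (t : α) : Fin (m + 2) → α :=
  cons u (snoc (α := fun _ => α) v t)

@[simp] theorem consSnoc_zero (u : α) (v : Fin m → α) (t : α) : consSnoc u v t 0 = u :=
  rfl

@[simp] theorem consSnoc_castSucc_succ (u : α) (v : Fin m → α) (t : α) (j : Fin m) :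
    consSnoc u v t j.castSucc.succ = v j := by
  simp [consSnoc]

@[simp] theorem consSnoc_last (u : α) (v : Fin m → α) (t : α) :
    consSnoc u v t (last (m + 1)) = t := by
  simp [consSnoc, ← succ_last]

end Fin

section Instance

variable {m : ℕ} {w : Fin m → ℤ}

@[simp] theorem avec_zero : avec m w 0 = eps := rfl

@[simp] theorem avec_last : avec m w (Fin.last (m + 1)) = Mval m w := by simp [avec]

@[simp] theorem avec_castSucc_succ (j : Fin m) : avec m w j.castSucc.succ = w j := by
  simp [avec, j.isLt.ne]

@[simp] theorem dvec_zero : dvec m w 0 = -Mval m w := rfl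

@[simp] theorem dvec_last : dvec m w (Fin.last (m + 1)) = eps := by simp [dvec]

@[simp] theorem dvec_castSucc_succ (j : Fin m) : dvec m w j.castSucc.succ = -w j := by
  simp [dvec, j.isLt.ne]

theorem Mval_pos (hw : ∀ i, 1 ≤ w i) : 0 < Mval m w := by
  have : 0 ≤ ∑ i, (w i : ℝ) :=
    Finset.sum_nonneg fun i _ => by exact_mod_cast (one_pos.trans_le (hw i)).le
  simp only [Mval, eps]; linarith

theorem avec_pos (hw : ∀ i, 1 ≤ w i) : ∀ i, 0 < avec m w i :=
  Fin.forall_add_two (by simp [eps]) (fun j => by simpa using one_pos.trans_le (hw j))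
    (by simpa using Mval_pos hw)

theorem sum_avec : ∑ i, avec m w i = eps + ∑ i, (w i : ℝ) + Mval m w := by
  simp [Fin.sum_univ_add_two]

theorem avec_dotProduct (x : Fin (m + 2) → ℝ) :
    avec m w ⬝ᵥ x = eps * x 0 + ∑ j, (w j : ℝ) * x j.castSucc.succ
      + Mval m w * x (Fin.last (m + 1)) := by
  simp [dotProduct, Fin.sum_univ_add_two]

theorem dvec_dotProduct (x : Fin (m + 2) → ℝ) :
    dvec m w ⬝ᵥ x = -(avec m w ⬝ᵥ x) + (eps - Mval m w) * x 0
      + (Mval m w + eps) * x (Fin.last (m + 1)) := by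
  rw [avec_dotProduct]
  simp only [dotProduct, Fin.sum_univ_add_two, dvec_zero, dvec_castSucc_succ, dvec_last, neg_mul,
    Finset.sum_neg_distrib]
  ring

namespace inU

variable {c : Fin (m + 2) → ℝ}

theorem div_avec (hw : ∀ i, 1 ≤ w i) (hc : inU m w c) (i : Fin (m + 2)) :
    c i / avec m w i = (i : ℕ) + 1 ∨ c i / avec m w i = m + 2 + ((i : ℕ) + 1) := by
  rcases hc i with h | h <;> simp [h, (avec_pos hw i).ne']

theorem pos (hw : ∀ i, 1 ≤ w i) (hc : inU m w c) (i : Fin (m + 2)) : 0 < c i := by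
  have := avec_pos hw i
  rcases hc i with h | h <;> rw [h] <;> positivity

theorem div_avec_zero (hw : ∀ i, 1 ≤ w i) (hc : inU m w c) :
    c 0 / avec m w 0 = 1 ∨ c 0 / avec m w 0 = m + 3 := by
  rcases div_avec hw hc 0 with h | h
  · left; simpa using h
  · right; rw [h, Fin.val_zero, Nat.cast_zero]; ring

theorem div_avec_last (hw : ∀ i, 1 ≤ w i) (hc : inU m w c) :
    c (Fin.last (m + 1)) / avec m w (Fin.last (m + 1)) = m + 2 ∨
      c (Fin.last (m + 1)) / avec m w (Fin.last (m + 1)) = 2 * m + 4 := by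
  rcases div_avec hw hc (Fin.last (m + 1)) with h | h
  · left; rw [h, Fin.val_last]; push_cast; ring
  · right; rw [h, Fin.val_last]; push_cast; ring

theorem div_avec_castSucc_succ (hw : ∀ i, 1 ≤ w i) (hc : inU m w c) (j : Fin m) :
    c j.castSucc.succ / avec m w j.castSucc.succ < m + 2 ∨
      m + 3 < c j.castSucc.succ / avec m w j.castSucc.succ := by
  have hj : ((j : ℕ) : ℝ) < m := by exact_mod_cast j.isLt
  rcases div_avec hw hc j.castSucc.succ with h | h
  · left; rw [h, Fin.val_succ, Fin.val_castSucc]; push_cast; linarith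
  · right; rw [h, Fin.val_succ, Fin.val_castSucc]; push_cast
    linarith [(j : ℕ).cast_nonneg (α := ℝ)]

end inU

end Instance

theorem isSubsetSum_sum_mul {m : ℕ} (w : Fin m → ℤ) {y : Fin m → ℝ}
    (hy : ∀ j, y j = 0 ∨ y j = 1) : isSubsetSum m w (∑ j, (w j : ℝ) * y j) := by
  classical
  refine ⟨Finset.univ.filter (y · = 1), ?_⟩
  rw [Finset.sum_filter]
  refine Finset.sum_congr rfl fun j _ => ?_
  rcases hy j with h | h <;> simp [h]

section SubsetSum

variable {m : ℕ} {w : Fin m → ℤ}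

theorem isSubsetSum.le_sub_one {s : ℝ} {W : ℤ} (hs : isSubsetSum m w s)
    (hW : ¬ isSubsetSum m w W) (hlt : s < W + 1) : s ≤ W - 1 := by
  obtain ⟨T, rfl⟩ := hs
  have hne : ∑ j ∈ T, w j ≠ W := fun h => hW ⟨T, by push_cast [← h]; rfl⟩
  rw [← Int.cast_sum] at hlt ⊢
  have : ∑ j ∈ T, w j < W + 1 := by exact_mod_cast hlt
  exact_mod_cast (by omega : ∑ j ∈ T, w j ≤ W - 1)

theorem isSubsetSum.nonneg {s : ℝ} (hw : ∀ i, 1 ≤ w i) (hs : isSubsetSum m w s) : 0 ≤ s := by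
  obtain ⟨T, rfl⟩ := hs
  exact Finset.sum_nonneg fun j _ => by exact_mod_cast (one_pos.trans_le (hw j)).le

end SubsetSum

section LowerBound

variable {m : ℕ} {w : Fin m → ℤ} {c x : Fin (m + 2) → ℝ} {b : ℝ}

theorem feasibleKP.last_lt_one (hw : ∀ i, 1 ≤ w i) (hb : b < Mval m w)
    (hx : feasibleKP (avec m w) b x) : x (Fin.last (m + 1)) < 1 := by
  have hle : avec m w (Fin.last (m + 1)) * x (Fin.last (m + 1)) ≤ ∑ i, avec m w i * x i :=
    Finset.single_le_sum (fun i _ => mul_nonneg (avec_pos hw i).le (hx.2 i).1)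
      (Finset.mem_univ _)
  rw [avec_last] at hle
  by_contra! h
  nlinarith [hx.1, Mval_pos hw]

theorem optimalKP.castSucc_succ_eq_zero_or_one (hw : ∀ i, 1 ≤ w i) (hc : inU m w c)
    (hx : optimalKP (avec m w) c b x) (hxL : x (Fin.last (m + 1)) < 1) (hx0 : 0 < x 0)
    (j : Fin m) : x j.castSucc.succ = 0 ∨ x j.castSucc.succ = 1 := by
  obtain ⟨hj0, hj1⟩ := hx.1.2 j.castSucc.succ
  by_contra! hj
  have hle := hx.div_le_div_of_lt_one_of_pos (avec_pos hw) hxL (hj0.lt_of_ne' hj.1)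
  have hge := hx.div_le_div_of_lt_one_of_pos (avec_pos hw) (hj1.lt_of_ne hj.2) hx0
  rcases hc.div_avec_zero hw with h0 | h0 <;> rcases hc.div_avec_last hw with hL | hL <;>
    rcases hc.div_avec_castSucc_succ hw j with hm | hm <;> linarith

theorem optimalKP.zero_eq_one (hw : ∀ i, 1 ≤ w i) {W : ℤ} (hno : ¬ isSubsetSum m w W)
    (hb₁ : W ≤ b) (hb₂ : b ≤ W + 2 * eps) (hc : inU m w c) (hx : optimalKP (avec m w) c b x)
    (htight : avec m w ⬝ᵥ x = b) (hxL : x (Fin.last (m + 1)) < 1) (hx0 : 0 < x 0) :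
    x 0 = 1 := by
  by_contra hne
  have hx0' : x 0 < 1 := (hx.1.2 0).2.lt_of_ne hne
  have hL : x (Fin.last (m + 1)) = 0 := by
    by_contra hL₀
    have hle := hx.div_le_div_of_lt_one_of_pos (avec_pos hw) hx0' ((hx.1.2 _).1.lt_of_ne' hL₀)
    have hge := hx.div_le_div_of_lt_one_of_pos (avec_pos hw) hxL hx0
    rcases hc.div_avec_zero hw with h0 | h0 <;> rcases hc.div_avec_last hw with hL | hL <;>
      linarith
  -- `b - ε x₀` is then a subset sum in `(W - 1, W + 1)`, hence `W`
  have hs := isSubsetSum_sum_mul w (hx.castSucc_succ_eq_zero_or_one hw hc hxL hx0)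
  rw [avec_dotProduct, hL, mul_zero, add_zero] at htight
  rw [show eps = 1 / 4 from rfl] at htight hb₂
  have := hs.le_sub_one hno (by linarith)
  linarith

theorem le_dvec_dotProduct_of_optimalKP (hw : ∀ i, 1 ≤ w i) {W : ℤ}
    (hW : W ≤ (∑ i, w i) - 1) (hno : ¬ isSubsetSum m w W) {V : ℝ} (hV : 0 ≤ V)
    (hVmax : ∀ V' : ℝ, isSubsetSum m w V' → V' < W → V' ≤ V)
    (hb₁ : W ≤ b) (hb₂ : b ≤ W + 2 * eps) (hc : inU m w c)
    (hx : optimalKP (avec m w) c b x) :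
    -Mval m w - V + eps / Mval m w * (b - V - eps) ≤ dvec m w ⬝ᵥ x := by
  have hWR : (W : ℝ) ≤ ∑ i, (w i : ℝ) - 1 := by exact_mod_cast hW
  have hM : Mval m w = ∑ i, (w i : ℝ) + 1 / 4 := rfl
  have heps : eps = 1 / 4 := rfl
  have hM₀ := Mval_pos hw
  have hbox := hx.1.2
  have hxL := hx.1.last_lt_one hw (by linarith)
  have htight : avec m w ⬝ᵥ x = b :=
    hx.dotProduct_eq (avec_pos hw) (hc.pos hw) (by rw [sum_avec]; linarith)
  rw [dvec_dotProduct, htight]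
  rcases (hbox 0).1.eq_or_lt with hx0 | hx0
  · have : eps / Mval m w * (b - V - eps) ≤ eps := by
      rw [div_mul_eq_mul_div, div_le_iff₀ hM₀]; nlinarith
    nlinarith [(hbox (Fin.last (m + 1))).1]
  have hs := isSubsetSum_sum_mul w (hx.castSucc_succ_eq_zero_or_one hw hc hxL hx0)
  have hx0₁ := hx.zero_eq_one hw hno hb₁ hb₂ hc htight hxL hx0
  have hsplit := avec_dotProduct (w := w) x
  rw [htight, hx0₁] at hsplit
  have hMxL : 0 ≤ Mval m w * x (Fin.last (m + 1)) := mul_nonneg hM₀.le (hbox _).1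
  have hsV := hVmax _ hs (by linarith [hs.le_sub_one hno (by linarith)])
  have hxL' : (b - eps - V) / Mval m w ≤ x (Fin.last (m + 1)) := by
    rw [div_le_iff₀ hM₀]; linarith
  calc -Mval m w - V + eps / Mval m w * (b - V - eps)
      = -b + (eps - Mval m w) * 1 + (Mval m w + eps) * ((b - eps - V) / Mval m w) := by
        field_simp; ring
    _ ≤ _ := by rw [hx0₁]; gcongr; linarith

end LowerBound

theorem exists_optimalKP_dvec_dotProduct_eq {m : ℕ} {w : Fin m → ℤ} (hw : ∀ i, 1 ≤ w i) {W : ℤ}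
    (hW : W ≤ (∑ i, w i) - 1) {S : Finset (Fin m)} (hV₁ : ∑ j ∈ S, (w j : ℝ) ≤ W - 1)
    {b : ℝ} (hb₁ : W ≤ b) (hb₂ : b ≤ W + 2 * eps) :
    ∃ c x, inU m w c ∧ optimalKP (avec m w) c b x ∧
      dvec m w ⬝ᵥ x = -Mval m w - ∑ j ∈ S, (w j : ℝ)
        + eps / Mval m w * (b - ∑ j ∈ S, (w j : ℝ) - eps) := by
  classical
  set V := ∑ j ∈ S, (w j : ℝ)
  have hV₀ : 0 ≤ V := isSubsetSum.nonneg hw ⟨S, rfl⟩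
  have hWR : (W : ℝ) ≤ ∑ i, (w i : ℝ) - 1 := by exact_mod_cast hW
  have hM : Mval m w = ∑ i, (w i : ℝ) + 1 / 4 := rfl
  have heps : eps = 1 / 4 := rfl
  have hM₀ : 0 < Mval m w := Mval_pos hw
  -- dual price `m + 2`: the ratio of the `M`-item, the only fractional one
  let κ : Fin (m + 2) → ℝ :=
    Fin.consSnoc (m + 3) (fun j => if j ∈ S then m + j + 4 else j + 2) (m + 2)
  let x : Fin (m + 2) → ℝ :=
    Fin.consSnoc 1 (fun j => if j ∈ S then 1 else 0) ((b - eps - V) / Mval m w)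
  have hκ : ∀ i, κ i = (i : ℕ) + 1 ∨ κ i = m + 2 + ((i : ℕ) + 1) := by
    refine Fin.forall_add_two ?_ (fun j => ?_) ?_
    · right; simp only [κ, Fin.consSnoc_zero, Fin.val_zero, Nat.cast_zero]; ring
    · simp only [κ, Fin.consSnoc_castSucc_succ, Fin.val_succ, Fin.val_castSucc]
      push_cast
      split_ifs
      · right; ring
      · left; ring
    · left; simp only [κ, Fin.consSnoc_last, Fin.val_last]; push_cast; ring
  have hxL : (b - eps - V) / Mval m w ∈ Set.Icc 0 1 := by
    constructor
    · apply div_nonneg <;> linarith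
    · rw [div_le_one hM₀]; linarith
  have htight : avec m w ⬝ᵥ x = b := by
    simp only [avec_dotProduct, x, Fin.consSnoc_zero, Fin.consSnoc_castSucc_succ,
      Fin.consSnoc_last, mul_ite, mul_one, mul_zero, Finset.sum_ite_mem, Finset.univ_inter]
    field_simp
    ring
  refine ⟨fun i => κ i * avec m w i, x, fun i => ?_, ?_, ?_⟩
  · rcases hκ i with h | h <;> simp [h]
  · refine optimalKP_of_dual (r := m + 2) (by positivity) ?_ htight ?_
    · refine Fin.forall_add_two (by simp [x]) (fun j => ?_) (by simpa [x] using hxL)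
      by_cases hj : j ∈ S <;> simp [x, hj]
    · simp only [mul_lt_mul_iff_left₀ (avec_pos hw _)]
      refine Fin.forall_add_two (by norm_num [κ, x]) (fun j => ?_) (by simp [κ, x])
      by_cases hj : j ∈ S
      · simp only [κ, x, Fin.consSnoc_castSucc_succ, hj, if_true]
        exact ⟨fun _ => trivial, fun h => by linarith [(j : ℕ).cast_nonneg (α := ℝ)]⟩
      · simp [κ, x, hj]
  · rw [dvec_dotProduct, htight]
    simp only [x, Fin.consSnoc_zero, Fin.consSnoc_last]
    field_simp
    ring

theorem fval_eq {m : ℕ} {w : Fin m → ℤ} (hw : ∀ i, 1 ≤ w i) {W : ℤ}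
    (hW : W ≤ (∑ i, w i) - 1) (hno : ¬ isSubsetSum m w W) {V : ℝ} (hV : isSubsetSum m w V)
    (hVW : V < W) (hVmax : ∀ V' : ℝ, isSubsetSum m w V' → V' < W → V' ≤ V)
    {b : ℝ} (hb : b ∈ Set.Icc (W : ℝ) (W + 2 * eps)) :
    fval m w b = -Mval m w - V + eps / Mval m w * (b - V - eps) := by
  have hV₁ := hV.le_sub_one hno (by linarith)
  have hV₀ := hV.nonneg hw
  obtain ⟨S, rfl⟩ := hV
  obtain ⟨c, x, hc, hx, hval⟩ := exists_optimalKP_dvec_dotProduct_eq hw hW hV₁ hb.1 hb.2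
  refine IsLeast.csInf_eq ⟨⟨c, x, hc, hx, hval.symm⟩, ?_⟩
  rintro _ ⟨c', x', hc', hx', rfl⟩
  exact le_dvec_dotProduct_of_optimalKP hw hW hno hV₀ hVmax hb.1 hb.2 hc' hx'

theorem discrete_uncorrelated_no_instance_general
    (m : ℕ) (w : Fin m → ℤ) (W : ℤ) (hw : ∀ i, 1 ≤ w i)
    (hW2 : W ≤ (∑ i, w i) - 1)
    (hno : ¬ isSubsetSum m w (W : ℝ))
    (V : ℝ) (hV : isSubsetSum m w V) (hVW : V < (W : ℝ))
    (hVmax : ∀ V' : ℝ, isSubsetSum m w V' → V' < (W : ℝ) → V' ≤ V) :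
    (∀ b ∈ Set.Icc (W : ℝ) ((W : ℝ) + 2 * eps),
      fval m w b = -Mval m w - V + eps / Mval m w * (b - V - eps)) ∧
    StrictMonoOn (fval m w) (Set.Icc (W : ℝ) ((W : ℝ) + 2 * eps)) ∧
    (∀ b ∈ Set.Icc (W : ℝ) ((W : ℝ) + 2 * eps), b ≠ (W : ℝ) + 2 * eps →
      fval m w b < fval m w ((W : ℝ) + 2 * eps)) := by
  have hform := fun b (hb : b ∈ Set.Icc (W : ℝ) (W + 2 * eps)) =>
    fval_eq hw hW2 hno hV hVW hVmax hb
  have hslope : 0 < eps / Mval m w := div_pos (by norm_num [eps]) (Mval_pos hw)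
  have hmono : StrictMonoOn (fval m w) (Set.Icc (W : ℝ) (W + 2 * eps)) :=
    fun b₁ hb₁ b₂ hb₂ hlt => by
      rw [hform b₁ hb₁, hform b₂ hb₂]
      gcongr
  refine ⟨hform, hmono, fun b hb hne => hmono hb ?_ (hb.2.lt_of_ne hne)⟩
  exact ⟨by norm_num [eps], le_rfl⟩

/-- If `W` is not a subset sum, then on `[W, W + 2ε]` the leader's objective of
the discrete uncorrelated reduction instance is the affine function
`−M − V + (ε/M)(b − V − ε)` (with `V` the largest subset sum below `W`); in
particular it is strictly increasing there, with unique maximizer `W + 2ε`. -/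
theorem discrete_uncorrelated_no_instance
    (m : ℕ) (w : Fin m → ℤ) (W : ℤ) (hw : ∀ i, 1 ≤ w i)
    (hW1 : 1 ≤ W) (hW2 : W ≤ (∑ i, w i) - 1)
    (hno : ¬ isSubsetSum m w (W : ℝ))
    (V : ℝ) (hV : isSubsetSum m w V) (hVW : V < (W : ℝ))
    (hVmax : ∀ V' : ℝ, isSubsetSum m w V' → V' < (W : ℝ) → V' ≤ V) :
    (∀ b ∈ Set.Icc (W : ℝ) ((W : ℝ) + 2 * eps),
      fval m w b = -Mval m w - V + eps / Mval m w * (b - V - eps)) ∧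
    StrictMonoOn (fval m w) (Set.Icc (W : ℝ) ((W : ℝ) + 2 * eps)) ∧
    (∀ b ∈ Set.Icc (W : ℝ) ((W : ℝ) + 2 * eps), b ≠ (W : ℝ) + 2 * eps →
      fval m w b < fval m w ((W : ℝ) + 2 * eps)) :=
  discrete_uncorrelated_no_instance_general m w W hw hW2 hno V hV hVW hVmax

end
end
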